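/- arXiv:1306.4388 — 5 statements merged into one kernel-verified Lean document; each statement's English description precedes it below -/
import Mathlib

section
/- For all integers R, S, u, every positive integer v, and every real number μ, the identity (cos(πμ) + (−1)^R cos(uπS/v)) · Σ_{s=1}^{v−1} (−1)^{(R−1)(s−1)} sin((v−s)πμ) sin(uπsS/v) = (1/2) sin(vπμ) sin(uπS/v) holds. -/
/-!
Put `a = πμ`, `b = πuS/v` and `σ = (-1)^(R-1)`, so that `(-1)^R = -σ` and `σ² = 1`. By
`sin (p + a) + sin (p - a) = 2 sin p cos a` (and likewise for `b`), `2 (cos a - σ cos b)` times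
the `s`-th summand is `G s - G (s + 1)`, where
`G s = σ^(s-1) (sin ((v - s + 1) a) sin (s b) - σ sin ((v - s) a) sin ((s - 1) b))`.
The sum telescopes to `G 1 - G v = sin (v a) sin b - σ^(v-1) sin a sin (v b)`, and
`sin (v b) = sin (π u S) = 0`.
-/

open Real Finset

theorem two_mul_cos_sub_mul_sin_mul_sin (σ a b p q : ℝ) (hσ : σ * σ = 1) :
    2 * (cos a - σ * cos b) * (sin p * sin q) =
      (sin (p + a) * sin q - σ * (sin p * sin (q - b))) -
        σ * (sin p * sin (q + b) - σ * (sin (p - a) * sin q)) := by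
  simp only [sin_add, sin_sub]
  linear_combination (-(sin p * cos a - cos p * sin a) * sin q) * hσ

theorem two_mul_cos_sub_mul_sum_sin_mul_sin (σ a b : ℝ) (hσ : σ * σ = 1) (n : ℕ) :
    2 * (cos a - σ * cos b) *
        ∑ i ∈ range n, σ ^ i * sin ((n - i) * a) * sin ((i + 1) * b) =
      sin ((n + 1) * a) * sin b - σ ^ n * sin a * sin ((n + 1) * b) := by
  set G : ℕ → ℝ := fun i ↦
    σ ^ i * (sin ((n - i + 1) * a) * sin ((i + 1) * b) - σ * (sin ((n - i) * a) * sin (i * b)))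
  have step (i : ℕ) :
      2 * (cos a - σ * cos b) * (σ ^ i * sin ((n - i) * a) * sin ((i + 1) * b)) =
        G i - G (i + 1) := by
    have h := two_mul_cos_sub_mul_sin_mul_sin σ a b ((n - i) * a) ((i + 1) * b) hσ
    simp only [G, Nat.cast_add, Nat.cast_one, pow_succ]
    rw [show ((n : ℝ) - i + 1) * a = (n - i) * a + a by ring,
      show ((n : ℝ) - (i + 1) + 1) * a = (n - i) * a by ring,
      show ((n : ℝ) - (i + 1)) * a = (n - i) * a - a by ring,
      show ((i : ℝ) + 1 + 1) * b = (i + 1) * b + b by ring,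
      show (i : ℝ) * b = (i + 1) * b - b by ring]
    linear_combination σ ^ i * h
  rw [mul_sum, sum_congr rfl fun i _ ↦ step i, sum_range_sub']
  simp [G, mul_assoc]

theorem sum_Icc_one_natCast {M : Type*} [AddCommMonoid M] (f : ℤ → M) (n : ℕ) :
    ∑ s ∈ Icc (1 : ℤ) n, f s = ∑ i ∈ range n, f (i + 1) := by
  have : Icc (1 : ℤ) n = (range n).map (Nat.castEmbedding.trans (addRightEmbedding 1)) := by
    ext x
    simp only [mem_Icc, mem_map, mem_range, Function.Embedding.trans_apply,
      Nat.castEmbedding_apply, addRightEmbedding_apply]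
    constructor
    · intro h
      exact ⟨(x - 1).toNat, by omega, by omega⟩
    · rintro ⟨i, hi, rfl⟩
      omega
  simp [this]

/-- Lemma 7.1: the key trigonometric identity underlying the modular
S-transformation of atypical characters. -/
theorem atypical_trig_identity (R S u : ℤ) (v : ℤ) (hv : 0 < v) (μ : ℝ) :
    (Real.cos (π * μ) + (-1 : ℝ) ^ R * Real.cos ((u : ℝ) * π * S / v)) *
      ∑ s ∈ Finset.Icc (1 : ℤ) (v - 1),
        (-1 : ℝ) ^ ((R - 1) * (s - 1)) * Real.sin (((v : ℝ) - (s : ℝ)) * π * μ) *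
          Real.sin ((u : ℝ) * π * (s : ℝ) * S / v)
    = (1 / 2) * Real.sin ((v : ℝ) * π * μ) * Real.sin ((u : ℝ) * π * S / v) := by
  obtain ⟨n, rfl⟩ := Int.eq_succ_of_zero_lt hv
  set σ : ℝ := (-1) ^ (R - 1)
  set a := π * μ
  set b := u * π * S / (n + 1 : ℝ)
  have hσ : σ * σ = 1 := by
    rw [← zpow_add₀ (by norm_num), ← two_mul, zpow_mul]
    norm_num
  have hR : (-1 : ℝ) ^ R = -σ := by
    rw [show R = R - 1 + 1 by ring, zpow_add_one₀ (by norm_num)]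
    simp [σ]
  have hb : sin ((n + 1) * b) = 0 := by
    rw [show (n + 1) * b = (u * S : ℤ) * π by push_cast [b]; field_simp]
    exact sin_int_mul_pi _
  have hterm (i : ℕ) :
      (-1 : ℝ) ^ ((R - 1) * ((i : ℤ) + 1 - 1)) * sin ((((n : ℤ) + 1 : ℤ) - ((i + 1 : ℤ) : ℝ)) * π * μ) *
          sin (u * π * ((i + 1 : ℤ) : ℝ) * S / ((n : ℤ) + 1 : ℤ)) =
        σ ^ i * sin ((n - i) * a) * sin ((i + 1) * b) := by
    push_cast
    rw [add_sub_cancel_right, zpow_mul, zpow_natCast]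
    congr 2 <;> congr 1 <;> simp only [a, b] <;> ring
  have hsum := two_mul_cos_sub_mul_sum_sin_mul_sin σ a b hσ n
  rw [hb, mul_zero, sub_zero] at hsum
  rw [add_sub_cancel_right, sum_Icc_one_natCast, sum_congr rfl fun i _ ↦ hterm i, hR]
  push_cast
  rw [show (n + 1 : ℝ) * π * μ = (n + 1) * a by ring]
  linear_combination hsum / 2
end

section
/- For all integers R, S, u, every positive integer v, and every real number μ such that cos(πμ) + (−1)^R cos(uπS/v) ≠ 0, one has Σ_{s=1}^{v−1} (−1)^{(R−1)(s−1)} sin((v−s)πμ) sin(uπsS/v) = sin(vπμ) sin(uπS/v) / (2 (cos(πμ) + (−1)^R cos(uπS/v))). -/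
open Real

lemma sin_step (x m : ℝ) : Real.sin ((m + 2) * x) = 2 * Real.cos x * Real.sin ((m + 1) * x) - Real.sin (m * x) := by
  have h1 : (m + 2) * x = (m + 1) * x + x := by ring
  have h2 : m * x = (m + 1) * x - x := by ring
  rw [h1, h2, Real.sin_add, Real.sin_sub]
  ring

lemma key (A B δ : ℝ) (hδ : δ ^ 2 = 1) (n : ℕ) :
    2 * (Real.cos A - δ * Real.cos B) *
      ∑ s ∈ Finset.range n, δ ^ s * Real.sin (((n : ℝ) - s) * A) * Real.sin (((s : ℝ) + 1) * B)
    = Real.sin (((n : ℝ) + 1) * A) * Real.sin B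
      - δ ^ n * Real.sin A * Real.sin (((n : ℝ) + 1) * B) := by
  induction n using Nat.twoStepInduction with
  | zero =>
    simp
  | one =>
    simp only [Finset.range_one, Finset.sum_singleton]
    push_cast
    have h2A : Real.sin ((1 + 1) * A) = 2 * Real.sin A * Real.cos A := by
      rw [show ((1:ℝ)+1) * A = 2 * A by ring, Real.sin_two_mul]
    have h2B : Real.sin ((1 + 1) * B) = 2 * Real.sin B * Real.cos B := by
      rw [show ((1:ℝ)+1) * B = 2 * B by ring, Real.sin_two_mul]
    rw [h2A, h2B]
    simp only [pow_zero, pow_one]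
    ring_nf
  | more n ih0 ih1 =>
    push_cast at ih0 ih1 ⊢
    have hδ' : δ * δ = 1 := by nlinarith [hδ]
    have hpt : ∀ s ∈ Finset.range (n + 2),
        δ ^ s * Real.sin (((n : ℝ) + 2 - s) * A) * Real.sin (((s : ℝ) + 1) * B)
        = 2 * Real.cos A * (δ ^ s * Real.sin (((n : ℝ) + 1 - s) * A) * Real.sin (((s : ℝ) + 1) * B))
          - δ ^ s * Real.sin (((n : ℝ) - s) * A) * Real.sin (((s : ℝ) + 1) * B) := by
      intro s _
      have hs := sin_step A ((n : ℝ) - s)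
      rw [show ((n : ℝ) + 2 - s) = ((n : ℝ) - s) + 2 by ring,
        show ((n : ℝ) + 1 - s) = ((n : ℝ) - s) + 1 by ring, hs]
      ring
    have key2 : (∑ s ∈ Finset.range (n + 2),
          δ ^ s * Real.sin (((n : ℝ) + 2 - s) * A) * Real.sin (((s : ℝ) + 1) * B))
        = 2 * Real.cos A * (∑ s ∈ Finset.range (n + 1),
            δ ^ s * Real.sin (((n : ℝ) + 1 - s) * A) * Real.sin (((s : ℝ) + 1) * B))
          - (∑ s ∈ Finset.range n,
            δ ^ s * Real.sin (((n : ℝ) - s) * A) * Real.sin (((s : ℝ) + 1) * B))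
          + δ ^ (n + 1) * Real.sin A * Real.sin (((n : ℝ) + 2) * B) := by
      rw [Finset.sum_congr rfl hpt, Finset.sum_sub_distrib, ← Finset.mul_sum,
        Finset.sum_range_succ (fun s => δ ^ s * Real.sin (((n : ℝ) + 1 - s) * A) * Real.sin (((s : ℝ) + 1) * B)),
        Finset.sum_range_succ (fun s => δ ^ s * Real.sin (((n : ℝ) - s) * A) * Real.sin (((s : ℝ) + 1) * B)),
        Finset.sum_range_succ (fun s => δ ^ s * Real.sin (((n : ℝ) - s) * A) * Real.sin (((s : ℝ) + 1) * B))]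
      push_cast
      rw [show ((n : ℝ) + 1 - ((n : ℝ) + 1)) * A = 0 by ring,
        show ((n : ℝ) - (n : ℝ)) * A = 0 by ring,
        show ((n : ℝ) - ((n : ℝ) + 1)) * A = -A by ring, Real.sin_zero, Real.sin_neg,
        show ((n : ℝ) + 1 + 1) * B = ((n : ℝ) + 2) * B by ring]
      ring
    rw [key2]
    have hA3 := sin_step A ((n : ℝ) + 1)
    have hB3 := sin_step B ((n : ℝ) + 1)
    have hp2 : δ ^ (n + 2) = δ ^ n := by
      rw [pow_succ, pow_succ, mul_assoc, hδ', mul_one]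
    have hp1 : δ ^ (n + 1) = δ ^ n * δ := pow_succ δ n
    rw [hp1, hp2]
    rw [show ((n : ℝ) + 1 + 1) * A = ((n : ℝ) + 2) * A by ring,
      show ((n : ℝ) + 1 + 1) * B = ((n : ℝ) + 2) * B by ring] at ih1
    rw [show ((n : ℝ) + 1 + 2) * A = ((n : ℝ) + 3) * A by ring,
      show ((n : ℝ) + 1 + 1) * A = ((n : ℝ) + 2) * A by ring] at hA3
    rw [show ((n : ℝ) + 1 + 2) * B = ((n : ℝ) + 3) * B by ring,
      show ((n : ℝ) + 1 + 1) * B = ((n : ℝ) + 2) * B by ring] at hB3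
    rw [show ((n : ℝ) + 2 + 1) * A = ((n : ℝ) + 3) * A by ring,
      show ((n : ℝ) + 2 + 1) * B = ((n : ℝ) + 3) * B by ring]
    linear_combination (2 * Real.cos A) * ih1 - ih0 - Real.sin B * hA3
      + (δ ^ n * Real.sin A) * hB3
      - (2 * Real.cos B * δ ^ n * Real.sin A * Real.sin (((n : ℝ) + 2) * B)) * hδ'

/-- The quotient form of the trigonometric identity of Lemma 7.1, used in the
proof of Theorem 6.2 to compute the atypical S-matrix entries. -/
theorem atypical_trig_identity_div (R S u : ℤ) (v : ℤ) (hv : 0 < v) (μ : ℝ)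
    (h : Real.cos (π * μ) + (-1 : ℝ) ^ R * Real.cos ((u : ℝ) * π * S / v) ≠ 0) :
    ∑ s ∈ Finset.Icc (1 : ℤ) (v - 1),
        (-1 : ℝ) ^ ((R - 1) * (s - 1)) * Real.sin (((v : ℝ) - (s : ℝ)) * π * μ) *
          Real.sin ((u : ℝ) * π * (s : ℝ) * S / v)
    = Real.sin ((v : ℝ) * π * μ) * Real.sin ((u : ℝ) * π * S / v) /
        (2 * (Real.cos (π * μ) + (-1 : ℝ) ^ R * Real.cos ((u : ℝ) * π * S / v))) := by
  set A : ℝ := π * μ with hA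
  set B : ℝ := (u : ℝ) * π * S / v with hB
  set δ : ℝ := (-1 : ℝ) ^ (R - 1) with hδdef
  have hm1 : ((-1 : ℝ)) ≠ 0 := by norm_num
  have hδ2 : δ ^ 2 = 1 := by
    rw [hδdef, ← zpow_natCast, ← zpow_mul]
    exact Even.neg_one_zpow ⟨R - 1, by ring⟩
  have hneg : (-1 : ℝ) ^ R = -δ := by
    rw [hδdef, show R = (R - 1) + 1 by ring, zpow_add₀ hm1, zpow_one]
    ring
  set n : ℕ := (v - 1).toNat with hndef
  have hnv : ((n : ℤ)) = v - 1 := Int.toNat_of_nonneg (by omega)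
  have hnvR : ((n : ℝ)) = (v : ℝ) - 1 := by exact_mod_cast congrArg (Int.cast : ℤ → ℝ) hnv
  have hv0 : ((v : ℝ)) ≠ 0 := by
    exact_mod_cast (by omega : (v : ℤ) ≠ 0)
  have hsum : (∑ s ∈ Finset.Icc (1 : ℤ) (v - 1),
        (-1 : ℝ) ^ ((R - 1) * (s - 1)) * Real.sin (((v : ℝ) - (s : ℝ)) * π * μ) *
          Real.sin ((u : ℝ) * π * (s : ℝ) * S / v))
      = ∑ s ∈ Finset.range n, δ ^ s * Real.sin (((n : ℝ) - s) * A) * Real.sin (((s : ℝ) + 1) * B) := by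
    refine Finset.sum_nbij' (fun s => (s - 1).toNat) (fun t => (t : ℤ) + 1) ?_ ?_ ?_ ?_ ?_
    · intro a ha
      simp only [Finset.mem_Icc] at ha
      simp only [Finset.mem_range]
      omega
    · intro t ht
      simp only [Finset.mem_range] at ht
      simp only [Finset.mem_Icc]
      omega
    · intro a ha; simp only [Finset.mem_Icc] at ha; omega
    · intro t ht; simp only [Finset.mem_range] at ht; omega
    · intro s hs
      simp only [Finset.mem_Icc] at hs
      have ht : (((s - 1).toNat : ℤ)) = s - 1 := Int.toNat_of_nonneg (by omega)
      have htR : (((s - 1).toNat : ℝ)) = (s : ℝ) - 1 := by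
        exact_mod_cast congrArg (Int.cast : ℤ → ℝ) ht
      have hpow : (-1 : ℝ) ^ ((R - 1) * (s - 1)) = δ ^ ((s - 1).toNat) := by
        have h2 : δ ^ ((s - 1).toNat) = δ ^ ((s : ℤ) - 1) := by
          rw [← zpow_natCast, ht]
        rw [zpow_mul, ← hδdef, h2]
      rw [hpow, htR, show ((n : ℝ) - ((s : ℝ) - 1)) * A = ((v : ℝ) - (s : ℝ)) * π * μ by
          rw [hnvR, hA]; ring,
        show (((s : ℝ) - 1) + 1) * B = (u : ℝ) * π * (s : ℝ) * S / v by rw [hB]; ring]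
  have hkey := key A B δ hδ2 n
  have hvB : Real.sin (((n : ℝ) + 1) * B) = 0 := by
    rw [show ((n : ℝ) + 1) * B = ((u * S : ℤ) : ℝ) * π by
      rw [hnvR, hB]; push_cast; field_simp; ring]
    exact Real.sin_int_mul_pi _
  rw [hvB, mul_zero, sub_zero, show ((n : ℝ) + 1) * A = (v : ℝ) * π * μ by
    rw [hnvR, hA]; ring] at hkey
  have h2 : (2 : ℝ) * (Real.cos A + (-1 : ℝ) ^ R * Real.cos B) ≠ 0 :=
    mul_ne_zero two_ne_zero h
  rw [hsum, eq_div_iff h2, hneg]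
  linear_combination hkey
end

section
/- Let u ≥ 2 and v ≥ 2 be coprime integers and for integers r, s define Δ_{r,s} = ((vr − us)² − v²)/(4uv). Then for integers r, r' with 1 ≤ r, r' ≤ u−1 and s, s' with 1 ≤ s, s' ≤ v−1, one has Δ_{r,s} = Δ_{r',s'} if and only if (r',s') = (r,s) or (r',s') = (u−r, v−s). -/
theorem aux_dvd_zero (u c : ℤ) (hdvd : u ∣ c) (h : |c| < u) : c = 0 := by
  rcases hdvd with ⟨k, rfl⟩
  have hu0 : 0 < u := lt_of_le_of_lt (abs_nonneg _) h
  rcases lt_trichotomy k 0 with hk | hk | hk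
  · nlinarith [neg_abs_le (u*k)]
  · simp [hk]
  · nlinarith [le_abs_self (u*k)]

/-- Within the Kac table, Δ_{r,s} = Δ_{u−r,v−s} and there are no other coincidences
of the conformal dimensions Δ_{r,s} = ((vr − us)² − v²)/(4uv). -/
theorem conformal_dimension_coincidences (u v : ℤ) (hu : 2 ≤ u) (hv : 2 ≤ v)
    (huv : IsCoprime u v)
    (Δ : ℤ → ℤ → ℝ)
    (hΔ : ∀ r s : ℤ, Δ r s = (((v * r - u * s : ℤ) : ℝ) ^ 2 - (v : ℝ) ^ 2) / (4 * u * v))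
    (r s r' s' : ℤ)
    (hr1 : 1 ≤ r) (hr2 : r ≤ u - 1) (hr'1 : 1 ≤ r') (hr'2 : r' ≤ u - 1)
    (hs1 : 1 ≤ s) (hs2 : s ≤ v - 1) (hs'1 : 1 ≤ s') (hs'2 : s' ≤ v - 1) :
    Δ r s = Δ r' s' ↔ (r' = r ∧ s' = s) ∨ (r' = u - r ∧ s' = v - s) := by
  have hu0 : (0:ℝ) < (u:ℝ) := by exact_mod_cast (by linarith : (0:ℤ) < u)
  have hv0 : (0:ℝ) < (v:ℝ) := by exact_mod_cast (by linarith : (0:ℤ) < v)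
  have hden : (4:ℝ) * u * v ≠ 0 := by positivity
  have key : Δ r s = Δ r' s' ↔ (v*r - u*s)^2 = (v*r' - u*s')^2 := by
    rw [hΔ, hΔ, div_eq_div_iff hden hden]
    constructor
    · intro h1
      have h2 : ((v*r - u*s : ℤ):ℝ)^2 = ((v*r' - u*s' : ℤ):ℝ)^2 := by
        have := mul_right_cancel₀ hden (by linarith [h1] :
          (((v*r - u*s : ℤ):ℝ)^2 - (v:ℝ)^2) * (4*u*v)
            = (((v*r' - u*s' : ℤ):ℝ)^2 - (v:ℝ)^2) * (4*u*v))
        linarith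
      exact_mod_cast h2
    · intro h1
      have h2 : ((v*r - u*s : ℤ):ℝ)^2 = ((v*r' - u*s' : ℤ):ℝ)^2 := by exact_mod_cast h1
      rw [h2]
  rw [key]
  constructor
  · intro h1
    have hfac : (v*r - u*s - (v*r' - u*s')) * (v*r - u*s + (v*r' - u*s')) = 0 := by ring_nf; linarith [h1]
    rcases mul_eq_zero.mp hfac with h2 | h2
    · left
      have hdvd : u ∣ v * (r - r') := ⟨s - s', by linarith⟩
      have hdr : u ∣ r - r' := (huv.dvd_of_dvd_mul_left hdvd)
      have hrr : r - r' = 0 := aux_dvd_zero u _ hdr (by rw [abs_lt]; omega)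
      have hr'' : r' = r := by omega
      have hs'' : s' = s := by
        have h3 : u * (s' - s) = 0 := by subst hr''; linarith
        rcases mul_eq_zero.mp h3 with h4 | h4 <;> omega
      exact ⟨hr'', hs''⟩
    · right
      have hdvd : u ∣ v * (r + r') := ⟨s + s', by linarith⟩
      have hdr : u ∣ r + r' := (huv.dvd_of_dvd_mul_left hdvd)
      rcases hdr with ⟨k, hk⟩
      have hkpos : 0 < k := by nlinarith
      have hklt : k < 2 := by nlinarith
      have hk1 : k = 1 := by omega
      subst hk1
      have hru : r + r' = u := by simpa using hk
      have hsv : s + s' = v := by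
        have h3 : v * (r + r') = u * (s + s') := by linarith
        rw [hru] at h3
        have h4 := mul_left_cancel₀ (show u ≠ 0 by omega)
          (by linarith : u * v = u * (s + s'))
        omega
      exact ⟨by omega, by omega⟩
  · rintro (⟨rfl, rfl⟩ | ⟨rfl, rfl⟩) <;> ring
end

section
/- Let w ≥ 2 be an integer and, for integers a, b, c, define N(a,b;c) = 1 if |a−b| + 1 ≤ c ≤ min(a+b−1, 2w−a−b−1) and a+b+c is odd, and N(a,b;c) = 0 otherwise. Then for all integers t, t' with 1 ≤ t ≤ w−1, 1 ≤ t' ≤ w−1 and t + t' > w−1, and every integer t'', one has N(t,t';t'') − N(t+1,t'+1;t'') = 1 if t'' = 2w−t−t'−1 and N(t,t';t'') − N(t+1,t'+1;t'') = 0 otherwise. -/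
/-- Identity (7.10a) of the paper's lemma on Virasoro fusion coefficients. -/
theorem virasoro_fusion_identity_a (w : ℤ) (hw : 2 ≤ w)
    (N : ℤ → ℤ → ℤ → ℤ)
    (hN : ∀ a b c : ℤ, N a b c =
      if |a - b| + 1 ≤ c ∧ c ≤ min (a + b - 1) (2 * w - a - b - 1) ∧ Odd (a + b + c)
      then 1 else 0)
    (t t' : ℤ) (ht1 : 1 ≤ t) (ht2 : t ≤ w - 1) (ht'1 : 1 ≤ t') (ht'2 : t' ≤ w - 1)
    (htt' : w - 1 < t + t') (t'' : ℤ) :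
    N t t' t'' - N (t + 1) (t' + 1) t'' = if t'' = 2 * w - t - t' - 1 then 1 else 0 := by
  rw [hN, hN]
  have h : t + 1 - (t' + 1) = t - t' := by ring
  rw [h]
  simp only [le_min_iff, Int.odd_iff]
  rcases abs_cases (t - t') with ⟨h1, h2⟩ | ⟨h1, h2⟩ <;> rw [h1] <;> split_ifs <;> omega
end

section
/- Let v ≥ 2 be an integer and, for integers a, b, c, define N(a,b;c) = 1 if |a−b| + 1 ≤ c ≤ min(a+b−1, 2v−a−b−1) and a+b+c is odd, and N(a,b;c) = 0 otherwise. Then for all integers s, s' with 1 ≤ s ≤ v−1 and 1 ≤ s' ≤ v−1, and every integer s'', one has N(s, s'−1; s'') + N(s, s'+1; s'') = N(s−1, s'; s'') + N(s+1, s'; s''). -/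
set_option maxHeartbeats 2000000 in

/-- Commutativity of the Grothendieck fusion rule (7.4) for standard admissible
modules, expressed as an identity of Virasoro fusion multiplicities at level v. -/
theorem virasoro_fusion_commutativity (v : ℤ) (hv : 2 ≤ v)
    (N : ℤ → ℤ → ℤ → ℤ)
    (hN : ∀ a b c : ℤ, N a b c =
      if |a - b| + 1 ≤ c ∧ c ≤ min (a + b - 1) (2 * v - a - b - 1) ∧ Odd (a + b + c)
      then 1 else 0)
    (s s' : ℤ) (hs1 : 1 ≤ s) (hs2 : s ≤ v - 1) (hs'1 : 1 ≤ s') (hs'2 : s' ≤ v - 1)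
    (s'' : ℤ) :
    N s (s' - 1) s'' + N s (s' + 1) s'' = N (s - 1) s' s'' + N (s + 1) s' s'' := by
  simp only [hN, Int.odd_iff, abs_sub_comm]
  simp only [abs_eq_max_neg]
  split_ifs <;> omega
end
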